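/- For all θ, φ₀, φ₁ ∈ [0, π/2], the inequality cos θ·(cos²φ₀ − cos²φ₁) + sin θ·cos(φ₀ − φ₁) ≤ 1 holds. -/
import Mathlib


open Real

/-- The trigonometric inequality
`cos θ (cos²φ₀ − cos²φ₁) + sin θ cos(φ₀ − φ₁) ≤ 1` on `[0, π/2]³`. -/
theorem trig_inequality
    (θ φ₀ φ₁ : ℝ)
    (hθ : θ ∈ Set.Icc 0 (π / 2)) (hφ₀ : φ₀ ∈ Set.Icc 0 (π / 2))
    (hφ₁ : φ₁ ∈ Set.Icc 0 (π / 2)) :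
    cos θ * (cos φ₀ ^ 2 - cos φ₁ ^ 2) + sin θ * cos (φ₀ - φ₁) ≤ 1 := by
  have key : cos φ₀ ^ 2 - cos φ₁ ^ 2 = sin (φ₀ + φ₁) * sin (φ₁ - φ₀) := by
    rw [sin_add, sin_sub]
    nlinarith [sin_sq_add_cos_sq φ₀, sin_sq_add_cos_sq φ₁]
  have hcos : cos (φ₀ - φ₁) = cos (φ₁ - φ₀) := by rw [← cos_neg]; ring_nf
  rw [key, hcos]
  have h2 : (cos θ * sin (φ₀ + φ₁) * sin (φ₁ - φ₀) + sin θ * cos (φ₁ - φ₀)) ^ 2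
      ≤ (cos θ * sin (φ₀ + φ₁)) ^ 2 + sin θ ^ 2 := by
    nlinarith [sq_nonneg (cos θ * sin (φ₀ + φ₁) * cos (φ₁ - φ₀) - sin θ * sin (φ₁ - φ₀)),
      sin_sq_add_cos_sq (φ₁ - φ₀)]
  have h3 : (cos θ * sin (φ₀ + φ₁)) ^ 2 + sin θ ^ 2 ≤ 1 := by
    nlinarith [sin_sq_add_cos_sq θ, sin_sq_le_one (φ₀ + φ₁), sq_nonneg (cos θ)]
  nlinarith [sq_nonneg (cos θ * sin (φ₀ + φ₁) * sin (φ₁ - φ₀) + sin θ * cos (φ₁ - φ₀) - 1)]
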